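/- arXiv:2508.21486 — 2 statements merged into one kernel-verified Lean document; each statement's English description precedes it below -/
import Mathlib

section
/- Let A and B be positive definite matrices on a finite-dimensional Hilbert space and let t = min{λ_min(A), λ_min(B)} > 0. Then ‖√A − √B‖∞ ≤ (1/2)·t^{−1/2}·‖A − B‖∞. -/
open Matrix
open scoped ComplexOrder Matrix.Norms.L2Operator ENNReal NNReal

namespace Matrix.PosSemidef

/-- The positive semidefinite square root of a positive semidefinite matrix (the definition
of `Matrix.PosSemidef.sqrt` from the older Mathlib, since removed). -/
noncomputable def sqrt {n 𝕜 : Type*} [Fintype n] [RCLike 𝕜] [DecidableEq n]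
    {A : Matrix n n 𝕜} (hA : A.PosSemidef) : Matrix n n 𝕜 :=
  hA.1.eigenvectorUnitary.1 * diagonal ((↑) ∘ (√·) ∘ hA.1.eigenvalues) *
  (star hA.1.eigenvectorUnitary : Matrix n n 𝕜)

lemma posSemidef_sqrt {n : Type*} [Fintype n] [DecidableEq n] {A : Matrix n n ℂ}
    (hA : A.PosSemidef) : hA.sqrt.PosSemidef := by
  unfold sqrt
  rw [star_eq_conjTranspose]
  exact (Matrix.PosSemidef.diagonal (fun i => by
    simp [Function.comp_apply, Real.sqrt_nonneg])).mul_mul_conjTranspose_same _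

lemma sqrt_mul_self {n : Type*} [Fintype n] [DecidableEq n] {A : Matrix n n ℂ}
    (hA : A.PosSemidef) : hA.sqrt * hA.sqrt = A := by
  unfold sqrt
  have hU : star (hA.1.eigenvectorUnitary : Matrix n n ℂ) * hA.1.eigenvectorUnitary.1 = 1 :=
    Unitary.star_mul_self_of_mem hA.1.eigenvectorUnitary.2
  have hd : diagonal ((RCLike.ofReal ∘ (√·) ∘ hA.1.eigenvalues) : n → ℂ) *
      diagonal ((RCLike.ofReal ∘ (√·) ∘ hA.1.eigenvalues) : n → ℂ) =
      diagonal ((RCLike.ofReal ∘ hA.1.eigenvalues) : n → ℂ) := by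
    rw [diagonal_mul_diagonal]
    congr 1
    funext i
    simp only [Function.comp_apply, ← RCLike.ofReal_mul, Real.mul_self_sqrt (hA.eigenvalues_nonneg i)]
  conv_rhs => rw [hA.1.spectral_theorem, Unitary.conjStarAlgAut_apply]
  simp only [mul_assoc]
  rw [← mul_assoc (star (hA.1.eigenvectorUnitary : Matrix n n ℂ)) hA.1.eigenvectorUnitary.1,
    hU, one_mul, ← mul_assoc (diagonal _) (diagonal _), hd]

end Matrix.PosSemidef

lemma aux_sqrt_sub_smul {n : Type*} [Fintype n] [DecidableEq n]
    {A : Matrix n n ℂ} (hA : A.PosSemidef) {c : ℝ}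
    (hc : ∀ i, c ≤ Real.sqrt (hA.1.eigenvalues i)) :
    (hA.sqrt - (c : ℂ) • 1).PosSemidef := by
  have key : hA.sqrt - (c : ℂ) • 1 =
      hA.1.eigenvectorUnitary.1 *
        diagonal (fun i => ((Real.sqrt (hA.1.eigenvalues i) - c : ℝ) : ℂ)) *
        (star hA.1.eigenvectorUnitary.1) := by
    have hU : (hA.1.eigenvectorUnitary.1 : Matrix n n ℂ) * (star hA.1.eigenvectorUnitary.1) = 1 :=
      Unitary.mul_star_self_of_mem hA.1.eigenvectorUnitary.2
    have h1 : (c : ℂ) • (1 : Matrix n n ℂ) =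
        hA.1.eigenvectorUnitary.1 * ((c : ℂ) • 1) * (star hA.1.eigenvectorUnitary.1) := by
      rw [mul_smul_comm, smul_mul_assoc, mul_one, hU]
    rw [Matrix.PosSemidef.sqrt, h1, ← sub_mul, ← mul_sub]
    congr 2
    rw [← Matrix.diagonal_one, ← Matrix.diagonal_smul, Matrix.diagonal_sub]
    ext i
    simp [Complex.ofReal_sub]
  rw [key]
  exact (Matrix.PosSemidef.diagonal
    (d := fun i => ((Real.sqrt (hA.1.eigenvalues i) - c : ℝ) : ℂ)) (by
      intro i
      simp only [Pi.zero_apply]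
      rw [Complex.zero_le_real]; linarith [hc i])).mul_mul_conjTranspose_same _

lemma aux_quad_lower {n : Type*} [Fintype n] [DecidableEq n]
    {A : Matrix n n ℂ} (hA : A.PosSemidef) {c : ℝ}
    (hc : ∀ i, c ≤ Real.sqrt (hA.1.eigenvalues i)) (x : n → ℂ) (hx : star x ⬝ᵥ x = 1) :
    (c : ℂ) ≤ star x ⬝ᵥ (hA.sqrt *ᵥ x) := by
  have h := (aux_sqrt_sub_smul hA hc).dotProduct_mulVec_nonneg x
  rw [Matrix.sub_mulVec, dotProduct_sub, Matrix.smul_mulVec, Matrix.one_mulVec,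
    dotProduct_smul, hx, smul_eq_mul, mul_one, sub_nonneg] at h
  exact h

noncomputable instance {n : Type*} [Fintype n] [DecidableEq n] :
    CStarAlgebra (Matrix n n ℂ) := Matrix.instCStarAlgebra

/-- For positive definite matrices `A`, `B` with `t = min(λ_min(A), λ_min(B)) > 0`, the square
roots satisfy `‖√A − √B‖∞ ≤ (1/2) t^{-1/2} ‖A − B‖∞` (the `r = 1/2` operator power
perturbation inequality). -/
theorem sqrt_perturbation_bound {n : Type*} [Fintype n] [DecidableEq n] [Nonempty n]
    (A B : Matrix n n ℂ) (hA : A.PosDef) (hB : B.PosDef)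
    (t : ℝ) (ht : t = min (⨅ i, hA.1.eigenvalues i) (⨅ i, hB.1.eigenvalues i))
    (htpos : 0 < t) :
    ‖hA.posSemidef.sqrt - hB.posSemidef.sqrt‖ ≤
      (1 / 2) * t ^ (-(1 : ℝ) / 2) * ‖A - B‖ := by
  set S := hA.posSemidef.sqrt with hSdef
  set T := hB.posSemidef.sqrt with hTdef
  set X := S - T with hXdef
  have hS := hA.posSemidef.posSemidef_sqrt
  have hT := hB.posSemidef.posSemidef_sqrt
  have hX : X.IsHermitian := hS.1.sub hT.1
  set s := Real.sqrt t with hsdef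
  have hs : 0 < s := Real.sqrt_pos.mpr htpos
  have htA : ∀ i, s ≤ Real.sqrt (hA.posSemidef.1.eigenvalues i) := fun i =>
    Real.sqrt_le_sqrt <| (ht ▸ min_le_left _ _).trans (ciInf_le (Finite.bddBelow_range _) i)
  have htB : ∀ i, s ≤ Real.sqrt (hB.posSemidef.1.eigenvalues i) := fun i =>
    Real.sqrt_le_sqrt <| (ht ▸ min_le_right _ _).trans (ciInf_le (Finite.bddBelow_range _) i)
  have hid : S * X + X * T = A - B := by
    rw [hXdef, mul_sub, sub_mul, hA.posSemidef.sqrt_mul_self, hB.posSemidef.sqrt_mul_self]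
    abel
  have key : ∀ i, |hX.eigenvalues i| * (2 * s) ≤ ‖A - B‖ := by
    intro i
    set v : EuclideanSpace ℂ n := hX.eigenvectorBasis i with hvdef
    set μ : ℝ := hX.eigenvalues i with hμdef
    have hv1 : star (⇑v) ⬝ᵥ (⇑v) = 1 := by
      have hn : ‖v‖ = 1 := hX.eigenvectorBasis.orthonormal.1 i
      have h2 : (inner ℂ v v : ℂ) = 1 := by
        rw [inner_self_eq_norm_sq_to_K, hn]; norm_num
      rw [EuclideanSpace.inner_eq_star_dotProduct] at h2
      exact (dotProduct_comm _ _).trans h2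
    have heig : X *ᵥ (⇑v) = (μ : ℂ) • (⇑v) := by
      rw [hvdef, hX.mulVec_eigenvectorBasis i]
      ext j
      simp [Complex.real_smul, hμdef]
    set qS : ℂ := star (⇑v) ⬝ᵥ (S *ᵥ ⇑v) with hqS
    set qT : ℂ := star (⇑v) ⬝ᵥ (T *ᵥ ⇑v) with hqT
    have hqS' : (s : ℂ) ≤ qS := aux_quad_lower hA.posSemidef htA _ hv1
    have hqT' : (s : ℂ) ≤ qT := aux_quad_lower hB.posSemidef htB _ hv1
    have hvmul : star (⇑v) ᵥ* X = star (X *ᵥ ⇑v) := by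
      rw [Matrix.star_mulVec, hX.eq]
    have hE : star (⇑v) ⬝ᵥ ((A - B) *ᵥ ⇑v) = (μ : ℂ) * (qS + qT) := by
      rw [← hid, Matrix.add_mulVec, dotProduct_add, ← Matrix.mulVec_mulVec, heig,
        Matrix.mulVec_smul, dotProduct_smul, ← Matrix.mulVec_mulVec,
        Matrix.dotProduct_mulVec (star ⇑v) X, hvmul, heig, star_smul, smul_dotProduct]
      simp only [smul_eq_mul, Complex.star_def, Complex.conj_ofReal, ← hqS, ← hqT]
      ring
    rw [Complex.le_def] at hqS' hqT'
    simp only [Complex.ofReal_re, Complex.ofReal_im] at hqS' hqT'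
    have hsum : qS + qT = (((qS.re + qT.re : ℝ)) : ℂ) := by
      apply Complex.ext <;> simp [← hqS'.2, ← hqT'.2]
    have hnormsum : ‖qS + qT‖ = qS.re + qT.re := by
      rw [hsum, Complex.norm_real, Real.norm_eq_abs, abs_of_nonneg (by linarith [hqS'.1, hqT'.1, hs])]
    have hE' : |μ| * (2 * s) ≤ ‖star (⇑v) ⬝ᵥ ((A - B) *ᵥ ⇑v)‖ := by
      rw [hE, norm_mul, Complex.norm_real, Real.norm_eq_abs, hnormsum]
      exact mul_le_mul_of_nonneg_left (by linarith [hqS'.1, hqT'.1]) (abs_nonneg μ)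
    refine hE'.trans ?_
    set w : EuclideanSpace ℂ n := (EuclideanSpace.equiv n ℂ).symm ((A - B) *ᵥ ⇑v) with hwdef
    have h1 : star (⇑v) ⬝ᵥ ((A - B) *ᵥ ⇑v) = (inner ℂ v w : ℂ) := by
      rw [EuclideanSpace.inner_eq_star_dotProduct]; exact dotProduct_comm _ _
    rw [h1]
    calc ‖(inner ℂ v w : ℂ)‖ ≤ ‖v‖ * ‖w‖ := norm_inner_le_norm v w
      _ = ‖w‖ := by rw [hX.eigenvectorBasis.orthonormal.1 i, one_mul]
      _ ≤ ‖A - B‖ * ‖v‖ := Matrix.l2_opNorm_mulVec (A - B) v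
      _ = ‖A - B‖ := by rw [hX.eigenvectorBasis.orthonormal.1 i, mul_one]
  -- assemble
  have hnorm : ‖X‖ ≤ ‖A - B‖ / (2 * s) := by
    rw [← IsSelfAdjoint.toReal_spectralRadius_eq_norm (hX : IsSelfAdjoint X)]
    refine ENNReal.toReal_le_of_le_ofReal (by positivity) ?_
    show (⨆ k ∈ spectrum ℝ X, (‖k‖₊ : ℝ≥0∞)) ≤ ENNReal.ofReal (‖A - B‖ / (2 * s))
    refine iSup₂_le fun k hk => ?_
    rw [hX.spectrum_real_eq_range_eigenvalues] at hk
    obtain ⟨i, rfl⟩ := hk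
    rw [← enorm_eq_nnnorm, ← ofReal_norm]
    refine ENNReal.ofReal_le_ofReal ?_
    rw [Real.norm_eq_abs]
    rw [le_div_iff₀ (by positivity)]
    exact key i
  refine hnorm.trans (le_of_eq ?_)
  have hts : t ^ (-(1 : ℝ) / 2) = s⁻¹ := by
    rw [neg_div, Real.rpow_neg htpos.le, hsdef, Real.sqrt_eq_rpow]
  rw [hts]
  field_simp
end

section
/- Let ρ be a density operator on Q^{⊗n} whose subsystems are measured sequentially with the binary POVM {P, I−P}, where ‖P‖∞ ≤ δ for some δ ∈ [0,1]. Let N_P be the number of P-outcomes. Then for every c ≥ 0, Pr(N_P/n ≥ δ + c) ≤ Σ_{i=⌈n(δ+c)⌉}^{n} C(n,i)·δ^i·(1−δ)^{n−i}, i.e., N_P is stochastically dominated by a Binomial(n, δ) random variable. -/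
open MeasureTheory

lemma bd_base (δ : ℝ) (m : ℕ) :
    ∑ i ∈ Finset.Icc 0 m, (m.choose i : ℝ) * δ ^ i * (1 - δ) ^ (m - i) = 1 := by
  have h : Finset.Icc 0 m = Finset.range (m + 1) := by
    ext a; simp [Nat.lt_succ_iff]
  rw [h]
  calc ∑ i ∈ Finset.range (m + 1), (m.choose i : ℝ) * δ ^ i * (1 - δ) ^ (m - i)
      = ∑ i ∈ Finset.range (m + 1), δ ^ i * (1 - δ) ^ (m - i) * (m.choose i : ℝ) :=
        Finset.sum_congr rfl fun i _ => by ring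
    _ = (δ + (1 - δ)) ^ m := (add_pow δ (1 - δ) m).symm
    _ = 1 := by norm_num

lemma bd_rec (δ : ℝ) (m k : ℕ) (hk : 1 ≤ k) :
    ∑ i ∈ Finset.Icc k (m + 1), ((m + 1).choose i : ℝ) * δ ^ i * (1 - δ) ^ (m + 1 - i)
      = (1 - δ) * ∑ i ∈ Finset.Icc k m, (m.choose i : ℝ) * δ ^ i * (1 - δ) ^ (m - i)
        + δ * ∑ i ∈ Finset.Icc (k - 1) m, (m.choose i : ℝ) * δ ^ i * (1 - δ) ^ (m - i) := by
  have e1 : Finset.Icc k (m + 1)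
      = (Finset.Icc (k - 1) m).map ⟨fun j => j + 1, add_left_injective 1⟩ := by
    ext a
    simp only [Finset.mem_map, Finset.mem_Icc, Function.Embedding.coeFn_mk]
    constructor
    · rintro ⟨h1, h2⟩; exact ⟨a - 1, ⟨by omega, by omega⟩, by omega⟩
    · rintro ⟨j, ⟨h1, h2⟩, rfl⟩; omega
  have key : ∀ j ∈ Finset.Icc (k - 1) m,
      ((m + 1).choose (j + 1) : ℝ) * δ ^ (j + 1) * (1 - δ) ^ (m + 1 - (j + 1))
        = (1 - δ) * ((m.choose (j + 1) : ℝ) * δ ^ (j + 1) * (1 - δ) ^ (m - (j + 1)))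
          + δ * ((m.choose j : ℝ) * δ ^ j * (1 - δ) ^ (m - j)) := by
    intro j hj
    simp only [Finset.mem_Icc] at hj
    rcases Nat.lt_or_ge j m with h | h
    · have h1 : (m + 1).choose (j + 1) = m.choose j + m.choose (j + 1) :=
        Nat.choose_succ_succ m j
      have h2 : m + 1 - (j + 1) = (m - (j + 1)) + 1 := by omega
      have h3 : m - j = (m - (j + 1)) + 1 := by omega
      rw [h1, h2, h3]; push_cast; ring
    · have hjm : j = m := by omega
      subst hjm
      simp [Nat.choose_succ_self, Nat.choose_self, pow_succ]
      ring
  rw [e1, Finset.sum_map]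
  simp only [Function.Embedding.coeFn_mk]
  rw [Finset.sum_congr rfl key, Finset.sum_add_distrib, ← Finset.mul_sum, ← Finset.mul_sum]
  congr 1
  congr 1
  have e2 : ∑ j ∈ Finset.Icc (k - 1) m,
      (m.choose (j + 1) : ℝ) * δ ^ (j + 1) * (1 - δ) ^ (m - (j + 1))
      = ∑ i ∈ Finset.Icc k (m + 1), (m.choose i : ℝ) * δ ^ i * (1 - δ) ^ (m - i) := by
    rw [e1, Finset.sum_map]; simp
  rw [e2]
  rcases le_or_gt k (m + 1) with h | h
  · rw [Finset.sum_Icc_succ_top h]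
    simp [Nat.choose_succ_self]
  · rw [Finset.Icc_eq_empty (by omega), Finset.Icc_eq_empty (by omega)]

/-- Binomial stochastic domination for a sequentially measured `{0,1}`-valued process whose
conditional success probabilities are bounded by `δ`: for every `c ≥ 0`,
`Pr(N_P/n ≥ δ + c) ≤ Σ_{i=⌈n(δ+c)⌉}^n C(n,i) δ^i (1−δ)^{n−i}`. -/
theorem binomial_domination_of_small_povm {Ω : Type*} {m0 : MeasurableSpace Ω}
    (μ : Measure Ω) [IsProbabilityMeasure μ] (𝔽 : Filtration ℕ m0)
    (n : ℕ) (hn : 0 < n) (X : ℕ → Ω → ℝ) (δ : ℝ) (hδ0 : 0 ≤ δ) (hδ1 : δ ≤ 1)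
    (hval : ∀ i ω, X i ω = 0 ∨ X i ω = 1)
    (hadapted : ∀ i, 1 ≤ i → i ≤ n → StronglyMeasurable[𝔽 i] (X i))
    (hcond : ∀ i, 1 ≤ i → i ≤ n → ∀ᵐ ω ∂μ, (μ[X i | 𝔽 (i - 1)]) ω ≤ δ)
    (c : ℝ) (hc : 0 ≤ c) :
    μ {ω | δ + c ≤ (∑ i ∈ Finset.Icc 1 n, X i ω) / n} ≤
      ENNReal.ofReal (∑ i ∈ Finset.Icc (Nat.ceil ((n : ℝ) * (δ + c))) n,
        (n.choose i : ℝ) * δ ^ i * (1 - δ) ^ (n - i)) := by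
  classical
  have hXmeas : ∀ i, 1 ≤ i → i ≤ n → Measurable (X i) := fun i h1 h2 =>
    ((hadapted i h1 h2).mono (𝔽.le i)).measurable
  have hSmeas : ∀ m, m ≤ n →
      Measurable[𝔽 m] (fun ω => ∑ i ∈ Finset.Icc 1 m, X i ω) := by
    intro m hm
    apply Finset.measurable_sum
    intro i hi
    simp only [Finset.mem_Icc] at hi
    exact ((hadapted i hi.1 (hi.2.trans hm)).mono (𝔽.mono hi.2)).measurable
  have hEmeas : ∀ m, m ≤ n → ∀ k : ℕ,
      MeasurableSet[𝔽 m] {ω | (k : ℝ) ≤ ∑ i ∈ Finset.Icc 1 m, X i ω} :=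
    fun m hm k => measurableSet_le measurable_const (hSmeas m hm)
  have key : ∀ m, m ≤ n → ∀ k : ℕ,
      (μ {ω | (k : ℝ) ≤ ∑ i ∈ Finset.Icc 1 m, X i ω}).toReal
        ≤ ∑ i ∈ Finset.Icc k m, (m.choose i : ℝ) * δ ^ i * (1 - δ) ^ (m - i) := by
    intro m
    induction m with
    | zero =>
      intro _ k
      rcases Nat.eq_zero_or_pos k with rfl | hk
      · simp
      · have h1 : {ω | (k : ℝ) ≤ ∑ i ∈ Finset.Icc 1 0, X i ω} = (∅ : Set Ω) := by
          ext ω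
          simp only [Set.mem_setOf_eq, Set.mem_empty_iff_false, iff_false, not_le]
          rw [Finset.Icc_eq_empty (by omega), Finset.sum_empty]
          exact_mod_cast hk
        rw [h1, Finset.Icc_eq_empty (by omega)]
        simp
    | succ m ih =>
      intro hmn k
      have hm : m ≤ n := by omega
      rcases Nat.eq_zero_or_pos k with rfl | hk
      · rw [bd_base]
        calc (μ _).toReal ≤ (μ Set.univ).toReal :=
              ENNReal.toReal_mono (measure_ne_top μ _) (measure_mono (Set.subset_univ _))
          _ = 1 := by simp
      · set E1 : Set Ω := {ω | (k : ℝ) ≤ ∑ i ∈ Finset.Icc 1 m, X i ω} with hE1def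
        set E0 : Set Ω := {ω | ((k - 1 : ℕ) : ℝ) ≤ ∑ i ∈ Finset.Icc 1 m, X i ω} with hE0def
        set A : Set Ω := E0 \ E1 with hAdef
        set B : Set Ω := {ω | X (m + 1) ω = 1} with hBdef
        have hc1 : ((k - 1 : ℕ) : ℝ) = (k : ℝ) - 1 := by
          push_cast [hk]; ring
        have hsub : E1 ⊆ E0 := by
          intro ω hω
          simp only [hE1def, hE0def, Set.mem_setOf_eq] at *
          rw [hc1]; linarith
        have hE1m0 : MeasurableSet E1 := 𝔽.le m _ (hEmeas m hm k)
        have hE0m0 : MeasurableSet E0 := 𝔽.le m _ (hEmeas m hm (k - 1))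
        have hBm0 : MeasurableSet B :=
          (hXmeas (m + 1) (by omega) hmn) (measurableSet_singleton 1)
        have hsplit : {ω | (k : ℝ) ≤ ∑ i ∈ Finset.Icc 1 (m + 1), X i ω}
            = E1 ∪ (A ∩ B) := by
          ext ω
          simp only [hE1def, hE0def, hAdef, hBdef, Set.mem_union, Set.mem_inter_iff,
            Set.mem_diff, Set.mem_setOf_eq]
          rw [Finset.sum_Icc_succ_top (by omega), hc1]
          rcases hval (m + 1) ω with h | h <;> rw [h]
          · constructor
            · intro hx; left; linarith
            · rintro (hx | ⟨⟨h1, h2⟩, h01⟩)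
              · linarith
              · exact absurd h01 (by norm_num)
          · constructor
            · intro hx
              by_cases hkN : (k : ℝ) ≤ ∑ i ∈ Finset.Icc 1 m, X i ω
              · left; exact hkN
              · right; exact ⟨⟨by linarith, hkN⟩, rfl⟩
            · rintro (hx | ⟨⟨h1, h2⟩, _⟩) <;> linarith
        have hdis : Disjoint E1 (A ∩ B) :=
          (Set.disjoint_sdiff_right).mono_right Set.inter_subset_left
        have hXint : Integrable (X (m + 1)) μ := by
          refine (integrable_const (1 : ℝ)).mono'
            ((hXmeas (m + 1) (by omega) hmn).aestronglyMeasurable) ?_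
          filter_upwards with ω
          rcases hval (m + 1) ω with h | h <;> simp [h]
        have hA𝔽 : MeasurableSet[𝔽 m] A :=
          (hEmeas m hm (k - 1)).diff (hEmeas m hm k)
        have hAm0 : MeasurableSet A := 𝔽.le m _ hA𝔽
        have hind : X (m + 1) = Set.indicator B (fun _ => (1 : ℝ)) := by
          funext ω
          by_cases hω : ω ∈ B
          · rw [Set.indicator_of_mem hω]
            exact hω
          · rw [Set.indicator_of_notMem hω]
            rcases hval (m + 1) ω with h | h
            · exact h
            · exact absurd h hω
        have h1 : (μ (A ∩ B)).toReal = ∫ ω in A, X (m + 1) ω ∂μ := by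
          calc (μ (A ∩ B)).toReal = (μ.restrict A B).toReal := by
                rw [Measure.restrict_apply hBm0, Set.inter_comm]
            _ = ∫ ω in A, Set.indicator B (fun _ => (1 : ℝ)) ω ∂μ :=
                (integral_indicator_one hBm0).symm
            _ = ∫ ω in A, X (m + 1) ω ∂μ := by rw [← hind]
        have h2 : ∫ ω in A, X (m + 1) ω ∂μ = ∫ ω in A, (μ[X (m + 1)|𝔽 m]) ω ∂μ :=
          (setIntegral_condExp (𝔽.le m) hXint hA𝔽).symm
        have hcmh := hcond (m + 1) (by omega) hmn
        simp only [Nat.add_sub_cancel] at hcmh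
        have h3 : ∫ ω in A, (μ[X (m + 1)|𝔽 m]) ω ∂μ ≤ δ * (μ A).toReal := by
          calc ∫ ω in A, (μ[X (m + 1)|𝔽 m]) ω ∂μ ≤ ∫ _ω in A, δ ∂μ :=
                integral_mono_ae integrable_condExp.integrableOn
                  (integrable_const δ).integrableOn (ae_restrict_of_ae hcmh)
            _ = (μ A).toReal * δ := by rw [setIntegral_const]; simp [smul_eq_mul, measureReal_def]
            _ = δ * (μ A).toReal := mul_comm _ _
        have hAeq : (μ A).toReal = (μ E0).toReal - (μ E1).toReal := by
          rw [hAdef, measure_diff hsub hE1m0.nullMeasurableSet (measure_ne_top μ _),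
            ENNReal.toReal_sub_of_le (measure_mono hsub) (measure_ne_top μ _)]
        have hunion : (μ {ω | (k : ℝ) ≤ ∑ i ∈ Finset.Icc 1 (m + 1), X i ω}).toReal
            = (μ E1).toReal + (μ (A ∩ B)).toReal := by
          rw [hsplit, measure_union hdis (hAm0.inter hBm0),
            ENNReal.toReal_add (measure_ne_top μ _) (measure_ne_top μ _)]
        have ht : (μ (A ∩ B)).toReal ≤ δ * ((μ E0).toReal - (μ E1).toReal) := by
          rw [h1, h2, ← hAeq]
          exact h3
        have ihk := ih hm k
        have ihk1 := ih hm (k - 1)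
        calc (μ {ω | (k : ℝ) ≤ ∑ i ∈ Finset.Icc 1 (m + 1), X i ω}).toReal
            = (μ E1).toReal + (μ (A ∩ B)).toReal := hunion
          _ ≤ (μ E1).toReal + δ * ((μ E0).toReal - (μ E1).toReal) :=
              (add_le_add_iff_left _).mpr ht
          _ = (1 - δ) * (μ E1).toReal + δ * (μ E0).toReal := by ring
          _ ≤ (1 - δ) * (∑ i ∈ Finset.Icc k m, (m.choose i : ℝ) * δ ^ i * (1 - δ) ^ (m - i))
              + δ * (∑ i ∈ Finset.Icc (k - 1) m, (m.choose i : ℝ) * δ ^ i * (1 - δ) ^ (m - i)) :=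
              add_le_add (mul_le_mul_of_nonneg_left ihk (by linarith))
                (mul_le_mul_of_nonneg_left ihk1 hδ0)
          _ = ∑ i ∈ Finset.Icc k (m + 1), ((m + 1).choose i : ℝ) * δ ^ i * (1 - δ) ^ (m + 1 - i) :=
              (bd_rec δ m k hk).symm
  have hSnat : ∀ ω, ∃ N : ℕ, (∑ i ∈ Finset.Icc 1 n, X i ω) = N := by
    intro ω
    have hgen : ∀ m, ∃ N : ℕ, (∑ i ∈ Finset.Icc 1 m, X i ω) = N := by
      intro m
      induction m with
      | zero => exact ⟨0, by rw [Finset.Icc_eq_empty (by omega)]; simp⟩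
      | succ m ihm =>
        obtain ⟨N, hN⟩ := ihm
        rw [Finset.sum_Icc_succ_top (by omega)]
        rcases hval (m + 1) ω with h | h
        · exact ⟨N, by rw [hN, h, add_zero]⟩
        · exact ⟨N + 1, by rw [hN, h]; push_cast; ring⟩
    exact hgen n
  set K := Nat.ceil ((n : ℝ) * (δ + c)) with hK
  have hnp : (0 : ℝ) < n := by exact_mod_cast hn
  have hsub2 : {ω | δ + c ≤ (∑ i ∈ Finset.Icc 1 n, X i ω) / n}
      ⊆ {ω | (K : ℝ) ≤ ∑ i ∈ Finset.Icc 1 n, X i ω} := by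
    intro ω hω
    simp only [Set.mem_setOf_eq] at *
    obtain ⟨N, hN⟩ := hSnat ω
    rw [le_div_iff₀ hnp] at hω
    have h1 : (n : ℝ) * (δ + c) ≤ N := by rw [← hN]; linarith
    have h2 : K ≤ N := Nat.ceil_le.mpr h1
    rw [hN]
    exact_mod_cast h2
  calc μ {ω | δ + c ≤ (∑ i ∈ Finset.Icc 1 n, X i ω) / n}
      ≤ μ {ω | (K : ℝ) ≤ ∑ i ∈ Finset.Icc 1 n, X i ω} := measure_mono hsub2
    _ = ENNReal.ofReal ((μ {ω | (K : ℝ) ≤ ∑ i ∈ Finset.Icc 1 n, X i ω}).toReal) :=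
        (ENNReal.ofReal_toReal (measure_ne_top μ _)).symm
    _ ≤ ENNReal.ofReal (∑ i ∈ Finset.Icc K n, (n.choose i : ℝ) * δ ^ i * (1 - δ) ^ (n - i)) :=
        ENNReal.ofReal_le_ofReal (key n le_rfl K)
end
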